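/- arXiv:1504.06425 — 4 statements merged into one kernel-verified Lean document; each statement's English description precedes it below -/
import Mathlib

section
/- There is no function u : ℝ → ℝ, differentiable on all of ℝ, satisfying the strict Riccati differential inequality deriv u t < -(u t)^2 / 2 for all t ∈ ℝ. (Equivalently: any globally defined differentiable solution of u' < -u²/2 leads to a contradiction.) -/
/-!
For `u' < -u²/2` we have `u' < 0` and, wherever `u ≠ 0`, `(1/u)' = -u'/u² > 1/2`. If `u(a) > 0`,
then `u > 0` on `(-∞, a]` and `1/u(t) < 1/u(a) + (t - a)/2` there, which is `≤ 0` at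
`t = a - 2/u(a)`: the solution blows up in finite backward time. So a global solution is
nonpositive, and so is the global solution `t ↦ -u(-t)`; thus `u(1) ≥ 0 ≥ u(0)`, although `u`
is strictly decreasing.
-/

section Riccati

variable {u : ℝ → ℝ}

lemma deriv_neg_of_deriv_lt_neg_sq_div_two (hR : ∀ t, deriv u t < -(u t) ^ 2 / 2) (t : ℝ) :
    deriv u t < 0 := by
  nlinarith [hR t, sq_nonneg (u t)]

lemma deriv_neg_comp_neg_lt_neg_sq_div_two (hR : ∀ t, deriv u t < -(u t) ^ 2 / 2) (t : ℝ) :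
    deriv (fun s => -u (-s)) t < -(-u (-t)) ^ 2 / 2 := by
  rw [deriv.fun_neg, deriv_comp_neg, neg_neg, neg_sq]
  exact hR (-t)

lemma strictMonoOn_inv_sub_half (hR : ∀ t, deriv u t < -(u t) ^ 2 / 2) {s : Set ℝ}
    (hs : Convex ℝ s) (hne : ∀ t ∈ s, u t ≠ 0) :
    StrictMonoOn (fun t => (u t)⁻¹ - t / 2) s := by
  have hdiff : Differentiable ℝ u := fun t =>
    differentiableAt_of_deriv_ne_zero (deriv_neg_of_deriv_lt_neg_sq_div_two hR t).ne
  refine strictMonoOn_of_deriv_pos hs ?_ fun t ht => ?_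
  · exact (hdiff.continuous.continuousOn.inv₀ hne).sub (continuous_id.div_const 2).continuousOn
  · have hut := hne t (interior_subset ht)
    have hsq : 0 < u t ^ 2 := by positivity
    have hg : HasDerivAt (fun t => (u t)⁻¹ - t / 2) (-deriv u t / u t ^ 2 - 1 / 2) t :=
      ((hdiff t).hasDerivAt.fun_inv hut).fun_sub ((hasDerivAt_id' t).div_const 2)
    rw [hg.deriv, sub_pos, lt_div_iff₀ hsq]
    linarith [hR t]

lemma nonpos_of_deriv_lt_neg_sq_div_two (hR : ∀ t, deriv u t < -(u t) ^ 2 / 2) (a : ℝ) :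
    u a ≤ 0 := by
  by_contra! ha
  have hpos : ∀ t ∈ Set.Iic a, 0 < u t := fun t ht =>
    ha.trans_le ((strictAnti_of_deriv_neg (deriv_neg_of_deriv_lt_neg_sq_div_two hR)).antitone ht)
  have hmono := strictMonoOn_inv_sub_half hR (convex_Iic a) fun t ht => (hpos t ht).ne'
  set T := a - 2 * (u a)⁻¹
  have hT : T < a := by simpa [T] using ha
  have hlt : (u T)⁻¹ - T / 2 < (u a)⁻¹ - a / 2 := hmono hT.le Set.self_mem_Iic hT
  linarith [inv_pos.2 (hpos T hT.le)]

end Riccati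

theorem stmt_0 :
    ¬ ∃ u : ℝ → ℝ, Differentiable ℝ u ∧ ∀ t : ℝ, deriv u t < -(u t)^2 / 2 := by
  rintro ⟨u, -, hR⟩
  have hanti := strictAnti_of_deriv_neg (deriv_neg_of_deriv_lt_neg_sq_div_two hR)
  have hu0 := nonpos_of_deriv_lt_neg_sq_div_two hR 0
  have hu1 := nonpos_of_deriv_lt_neg_sq_div_two (deriv_neg_comp_neg_lt_neg_sq_div_two hR) (-1)
  simp only [neg_neg] at hu1
  linarith [hanti zero_lt_one]
end

section
/- Let u : ℝ → ℝ be differentiable with deriv u t < -(u t)^2 / 2 for all t ∈ ℝ. Then u t > 0 for all t ∈ ℝ. -/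
/-!
Since `u' < -u²/2 ≤ 0`, `u` is strictly decreasing, so once `u` is nonpositive it is negative
from then on. Where `u < 0`, the inequality `u' ≤ -c u²` says `(1/u)' ≥ c`, so `1/u` grows at
least linearly and reaches `0` by the time `t₀ - 1/(c u(t₀))`, which is impossible for a function
that stays negative: `u` would have to blow up to `-∞` in finite time.
-/

open Set

theorem monotoneOn_inv_sub_mul_of_deriv_le {u : ℝ → ℝ} {c : ℝ} {s : Set ℝ} (hs : Convex ℝ s)
    (hu : Differentiable ℝ u) (hne : ∀ t ∈ s, u t ≠ 0) (h : ∀ t ∈ s, deriv u t ≤ -c * u t ^ 2) :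
    MonotoneOn (fun t => (u t)⁻¹ - c * t) s := by
  have hderiv : ∀ t ∈ s, HasDerivAt (fun t => (u t)⁻¹ - c * t)
      (-deriv u t / u t ^ 2 - c * 1) t := fun t ht =>
    ((hu t).hasDerivAt.inv (hne t ht)).sub ((hasDerivAt_id' t).const_mul c)
  refine monotoneOn_of_deriv_nonneg hs
    (fun t ht => (hderiv t ht).continuousAt.continuousWithinAt)
    (fun t ht => (hderiv t (interior_subset ht)).differentiableAt.differentiableWithinAt)
    (fun t ht => ?_)
  have ht := interior_subset ht
  have hsq : 0 < u t ^ 2 := by have := hne t ht; positivity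
  rw [(hderiv t ht).deriv, mul_one, sub_nonneg, le_div_iff₀ hsq]
  linarith [h t ht]

theorem exists_nonneg_of_deriv_le_neg_mul_sq {u : ℝ → ℝ} {c t₀ : ℝ} (hc : 0 < c)
    (hu : Differentiable ℝ u) (h : ∀ t ≥ t₀, deriv u t ≤ -c * u t ^ 2) (h₀ : u t₀ < 0) :
    ∃ t ∈ Ioc t₀ (t₀ - (c * u t₀)⁻¹), 0 ≤ u t := by
  set T := t₀ - (c * u t₀)⁻¹
  have hT : t₀ < T := by
    have : (c * u t₀)⁻¹ < 0 := inv_lt_zero.2 (mul_neg_of_pos_of_neg hc h₀)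
    linarith
  by_contra! hneg
  have hneg_Icc : ∀ t ∈ Icc t₀ T, u t < 0 := fun t ht =>
    ht.1.eq_or_lt.elim (fun h => h ▸ h₀) fun h => hneg t ⟨h, ht.2⟩
  have hmono := monotoneOn_inv_sub_mul_of_deriv_le (convex_Icc t₀ T) hu
    (fun t ht => (hneg_Icc t ht).ne) (fun t ht => h t ht.1)
    (left_mem_Icc.2 hT.le) (right_mem_Icc.2 hT.le) hT.le
  have hT_inv : (u T)⁻¹ < 0 := inv_lt_zero.2 (hneg_Icc T (right_mem_Icc.2 hT.le))
  have hblowup : (u t₀)⁻¹ + c * (T - t₀) = 0 := by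
    simp only [T, sub_sub_cancel_left, mul_neg, mul_inv, ← mul_assoc, mul_inv_cancel₀ hc.ne',
      one_mul, add_neg_cancel]
  simp only at hmono
  linarith

theorem stmt_1 (u : ℝ → ℝ) (hu : Differentiable ℝ u)
    (h : ∀ t : ℝ, deriv u t < -(u t)^2 / 2) :
    ∀ t : ℝ, u t > 0 := by
  have hanti : StrictAnti u := strictAnti_of_deriv_neg fun t => by linarith [h t, sq_nonneg (u t)]
  by_contra! hle
  obtain ⟨t₀, ht₀⟩ := hle
  have h₁ : u (t₀ + 1) < 0 := (hanti (lt_add_one t₀)).trans_le ht₀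
  obtain ⟨t, ht, hnonneg⟩ := exists_nonneg_of_deriv_le_neg_mul_sq (c := 1 / 2) one_half_pos hu
    (fun t _ => by linarith [h t]) h₁
  linarith [hanti ht.1]
end

section
/- Let u : ℝ → ℝ be differentiable and satisfy deriv u t ≤ -(u t)²/2 - b for all t ∈ ℝ, where b > 0 is a constant. Then no such u exists (the hypotheses are contradictory). -/
/-!
The substitution `φ = arctan ∘ u` turns the Riccati inequality `u' ≤ -u²/2 - b` into
`φ' = u' / (1 + u²) ≤ -min (1/2) b`, because `u²/2 + b ≥ min (1/2) b * (1 + u²)`.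
So `φ` decreases at a uniform positive rate on all of `ℝ`, which is impossible for a function
with values in `(-π/2, π/2)`.
-/

open Real

lemma not_bddBelow_range_of_deriv_le_neg {f : ℝ → ℝ} {m : ℝ} (hm : 0 < m)
    (hf : Differentiable ℝ f) (hf' : ∀ t, deriv f t ≤ -m) : ¬ BddBelow (Set.range f) := by
  rintro ⟨C, hC⟩
  set t := max 0 ((f 0 - C + 1) / m)
  have hdecay : f t - f 0 ≤ -m * (t - 0) :=
    image_sub_le_mul_sub_of_deriv_le hf hf' (le_max_left _ _)
  have hmt : f 0 - C + 1 ≤ m * t := by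
    rw [← div_le_iff₀' hm]
    exact le_max_right _ _
  have hCt : C ≤ f t := hC ⟨t, rfl⟩
  linarith

lemma deriv_arctan_comp {u : ℝ → ℝ} {t : ℝ} (hu : DifferentiableAt ℝ u t) :
    deriv (fun s => arctan (u s)) t = deriv u t / (1 + u t ^ 2) := by
  rw [hu.hasDerivAt.arctan.deriv]
  ring

lemma div_one_add_sq_le_neg_min_of_riccati {b x y : ℝ} (hy : y ≤ -x ^ 2 / 2 - b) :
    y / (1 + x ^ 2) ≤ -min (1 / 2) b := by
  have hpos : 0 < 1 + x ^ 2 := by positivity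
  rw [div_le_iff₀ hpos]
  have h₁ : min (1 / 2) b ≤ 1 / 2 := min_le_left _ _
  have h₂ : min (1 / 2) b ≤ b := min_le_right _ _
  nlinarith [sq_nonneg x]

theorem stmt_14 (b : ℝ) (hb : 0 < b) :
    ¬ ∃ u : ℝ → ℝ, Differentiable ℝ u ∧ ∀ t : ℝ, deriv u t ≤ -(u t)^2 / 2 - b := by
  rintro ⟨u, hu, hriccati⟩
  have hφ : Differentiable ℝ (fun s => arctan (u s)) := differentiable_arctan.comp hu
  have hφ' : ∀ t, deriv (fun s => arctan (u s)) t ≤ -min (1 / 2) b := fun t => by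
    rw [deriv_arctan_comp (hu t)]
    exact div_one_add_sq_le_neg_min_of_riccati (hriccati t)
  refine not_bddBelow_range_of_deriv_le_neg (lt_min one_half_pos hb) hφ hφ' ⟨-(π / 2), ?_⟩
  rintro _ ⟨t, rfl⟩
  exact (neg_pi_div_two_lt_arctan _).le
end

section
/- Let g be a symmetric bilinear form of Lorentzian signature (-,+,+,+) on a 4-dimensional real vector space V, let k be a null vector, let f'∈ ℝ with f' ≠ 0, and suppose ω is an alternating form on V satisfying ω(k, L) = -f' and ω(x, y) = -ι with ι ≠ 0, and ω(k,x) = ω(k,y) = ω(L,x) = ω(L,y) = 0, for some null frame {k,x,y,L} as in the paper (x,y orthonormal spacelike orthogonal to k and L, g(L,L)=0, g(k,L) = -1). Then ω ∧ ω = 2 f' ι · (volume form dual to the frame), and in the basis {k,x,y,L} one has det(ω) = (f')² ι² > 0. -/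
/-!
On the frame `{k, x, y, L}` the Gram matrix of the alternating form `ω` is skew-symmetric, so its
determinant is the square of the Pfaffian `ω(k,x) ω(y,L) - ω(k,y) ω(x,L) + ω(k,L) ω(x,y)`, and
`(ω ∧ ω)(k, x, y, L)` is twice that Pfaffian. The only nonzero pairings `ω(k,L) = -f'` and
`ω(x,y) = -ι` make the Pfaffian `f' ι`.
-/

open Matrix

theorem Matrix.det_fin_four_of_skew {R : Type*} [CommRing R] (A : Matrix (Fin 4) (Fin 4) R)
    (hdiag : ∀ i, A i i = 0) (hskew : ∀ i j, A j i = -A i j) :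
    A.det = (A 0 1 * A 2 3 - A 0 2 * A 1 3 + A 0 3 * A 1 2) ^ 2 := by
  simp only [det_succ_row_zero, Fin.sum_univ_succ, det_unique, Fin.sum_univ_zero]
  simp [Fin.succAbove, Fin.lt_def, hdiag, hskew 0, hskew 1 2, hskew 1 3, hskew 2 3]
  ring

theorem LinearMap.IsAlt.det_gram_fin_four {R M : Type*} [CommRing R] [AddCommGroup M]
    [Module R M] {ω : M →ₗ[R] M →ₗ[R] R} (hω : ω.IsAlt) (v : Fin 4 → M) :
    (Matrix.of fun i j => ω (v i) (v j)).det =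
      (ω (v 0) (v 1) * ω (v 2) (v 3) - ω (v 0) (v 2) * ω (v 1) (v 3)
        + ω (v 0) (v 3) * ω (v 1) (v 2)) ^ 2 :=
  (Matrix.of fun i j => ω (v i) (v j)).det_fin_four_of_skew (fun i => hω (v i))
    fun i j => (hω.neg (v i) (v j)).symm

theorem stmt_16_general (V : Type*) [AddCommGroup V] [Module ℝ V]
    (k x y L : V)
    (ω : V →ₗ[ℝ] V →ₗ[ℝ] ℝ) (halt : ∀ v : V, ω v v = 0)
    (f' ι : ℝ) (hf' : f' ≠ 0) (hι : ι ≠ 0)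
    (hkL' : ω k L = -f') (hxy' : ω x y = -ι)
    (hkx' : ω k x = 0) (hky' : ω k y = 0) (hLx' : ω L x = 0) (hLy' : ω L y = 0) :
    -- (ω ∧ ω)(k, x, y, L) = 2 f' ι, i.e. ω ∧ ω is 2 f' ι times the volume form
    -- dual to the frame {k, x, y, L}
    2 * (ω k x * ω y L - ω k y * ω x L + ω k L * ω x y) = 2 * f' * ι ∧
    (Matrix.of fun i j : Fin 4 => ω (![k, x, y, L] i) (![k, x, y, L] j)).det
      = f' ^ 2 * ι ^ 2 ∧
    0 < (Matrix.of fun i j : Fin 4 => ω (![k, x, y, L] i) (![k, x, y, L] j)).det := by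
  have hω : ω.IsAlt := halt
  have hdet : (Matrix.of fun i j : Fin 4 => ω (![k, x, y, L] i) (![k, x, y, L] j)).det
      = f' ^ 2 * ι ^ 2 := by
    rw [hω.det_gram_fin_four]
    simp only [cons_val_zero, cons_val_one, cons_val, ← hω.neg L x, ← hω.neg L y, hkL', hxy',
      hkx', hky', hLx', hLy']
    ring
  refine ⟨?_, hdet, ?_⟩
  · rw [hkx', hky', hkL', hxy']
    ring
  · rw [hdet]
    positivity

theorem stmt_16 (V : Type*) [AddCommGroup V] [Module ℝ V]
    (g : V →ₗ[ℝ] V →ₗ[ℝ] ℝ) (hgsymm : ∀ v w : V, g v w = g w v)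
    (k x y L : V)
    -- null frame conditions: x, y orthonormal spacelike, orthogonal to the null
    -- vectors k and L, with g(k,L) = -1
    (hxx : g x x = 1) (hyy : g y y = 1) (hxy : g x y = 0)
    (hkx : g k x = 0) (hky : g k y = 0) (hLx : g L x = 0) (hLy : g L y = 0)
    (hkk : g k k = 0) (hLL : g L L = 0) (hkL : g k L = -1)
    (hbasis : LinearIndependent ℝ ![k, x, y, L])
    (ω : V →ₗ[ℝ] V →ₗ[ℝ] ℝ) (halt : ∀ v : V, ω v v = 0)
    (f' ι : ℝ) (hf' : f' ≠ 0) (hι : ι ≠ 0)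
    (hkL' : ω k L = -f') (hxy' : ω x y = -ι)
    (hkx' : ω k x = 0) (hky' : ω k y = 0) (hLx' : ω L x = 0) (hLy' : ω L y = 0) :
    -- (ω ∧ ω)(k, x, y, L) = 2 f' ι, i.e. ω ∧ ω is 2 f' ι times the volume form
    -- dual to the frame {k, x, y, L}
    2 * (ω k x * ω y L - ω k y * ω x L + ω k L * ω x y) = 2 * f' * ι ∧
    (Matrix.of fun i j : Fin 4 => ω (![k, x, y, L] i) (![k, x, y, L] j)).det
      = f' ^ 2 * ι ^ 2 ∧
    0 < (Matrix.of fun i j : Fin 4 => ω (![k, x, y, L] i) (![k, x, y, L] j)).det :=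
  stmt_16_general V k x y L ω halt f' ι hf' hι hkL' hxy' hkx' hky' hLx' hLy'
end
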